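/- Conversely, every even self-dual lattice 𝓛 ⊂ R^{n,n} (with respect to the signature (n,n) form) satisfying (L;L) ⊆ 𝓛 ⊆ (L*;L*) defines a modular invariant Z by Z_{[u],[v]} = 1 if (u;v) ∈ 𝓛 and 0 otherwise: Z commutes with S and T, has nonnegative integer entries, and Z_{[0],[0]} = 1. -/

import Mathlib

open scoped BigOperators
open Complex

noncomputable section

/-- The Euclidean dot product on `Fin n → ℝ`. -/
def dotR {n : ℕ} (u v : Fin n → ℝ) : ℝ := ∑ i, u i * v i

lemma dotR_add_left {n : ℕ} (u v w : Fin n → ℝ) :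
    dotR (u + v) w = dotR u w + dotR v w := by
  simp [dotR, add_mul, Finset.sum_add_distrib]

lemma dotR_neg_left {n : ℕ} (u w : Fin n → ℝ) : dotR (-u) w = -dotR u w := by
  simp [dotR]

/-- `L` is an even lattice: `u ⬝ u ∈ 2ℤ` for all `u ∈ L`. -/
def IsEvenLattice {n : ℕ} (L : AddSubgroup (Fin n → ℝ)) : Prop :=
  ∀ u ∈ L, ∃ m : ℤ, dotR u u = 2 * m

/-- The dual lattice `L* = {x : x ⬝ L ⊆ ℤ}`. -/
def dualLattice {n : ℕ} (L : AddSubgroup (Fin n → ℝ)) : AddSubgroup (Fin n → ℝ) where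
  carrier := {x | ∀ l ∈ L, ∃ m : ℤ, dotR x l = m}
  zero_mem' := fun l _ => ⟨0, by simp [dotR]⟩
  add_mem' := by
    intro a b ha hb l hl
    obtain ⟨m, hm⟩ := ha l hl
    obtain ⟨m', hm'⟩ := hb l hl
    exact ⟨m + m', by rw [dotR_add_left, hm, hm']; push_cast; ring⟩
  neg_mem' := by
    intro a ha l hl
    obtain ⟨m, hm⟩ := ha l hl
    exact ⟨-m, by rw [dotR_neg_left, hm]; push_cast; ring⟩

/-- The group of primaries `L*/L`. -/
abbrev latQuot {n : ℕ} (L : AddSubgroup (Fin n → ℝ)) :=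
  dualLattice L ⧸ (L.addSubgroupOf (dualLattice L))

/-- The class of an element of `L*` in `L*/L`. -/
def mkQ {n : ℕ} (L : AddSubgroup (Fin n → ℝ)) (x : dualLattice L) : latQuot L :=
  QuotientAddGroup.mk x

/-- The S-matrix of the lattice chiral data:
`S_{[u],[v]} = |L*/L|^{-1/2} exp(2 π i u⬝v)`. -/
def Smat {n : ℕ} (L : AddSubgroup (Fin n → ℝ)) [Fintype (latQuot L)] :
    Matrix (latQuot L) (latQuot L) ℂ := fun x y =>
  (((Real.sqrt (Fintype.card (latQuot L)))⁻¹ : ℝ) : ℂ) *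
    Complex.exp (2 * Real.pi * Complex.I *
      (dotR ((Quotient.out x : dualLattice L) : Fin n → ℝ)
            ((Quotient.out y : dualLattice L) : Fin n → ℝ)))

open scoped Classical in
/-- The T-matrix of the lattice chiral data. -/
def Tmat {n : ℕ} (L : AddSubgroup (Fin n → ℝ)) :
    Matrix (latQuot L) (latQuot L) ℂ := fun x y =>
  if x = y then
    Complex.exp (Real.pi * Complex.I *
        (dotR ((Quotient.out x : dualLattice L) : Fin n → ℝ)
              ((Quotient.out x : dualLattice L) : Fin n → ℝ))
      - Real.pi * Complex.I * n / 12)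
  else 0

/-- The hyperbolic (signature `(n,n)`) form on `ℝ^{n,n}`. -/
def hform {n : ℕ} (p q : (Fin n → ℝ) × (Fin n → ℝ)) : ℝ :=
  dotR p.1 q.1 - dotR p.2 q.2

/-!
Write `Q = L*/L`, `ψ(x, y) = exp(2πi x·y)` on `Q`, and `H = 𝓛/(L;L) ⊆ Q × Q`. Self-duality of
`𝓛` says exactly that `H` is its own annihilator for `((a, b), (c, d)) ↦ ψ(a, c) / ψ(b, d)`.
Expanding the indicator of `H` in characters by this annihilator property and summing the
characters over `Q` gives `|H| (ZS')_{xy} = |Q| |R| (S'Z)_{xy}`, where `S' = (ψ(x, y))` and `R`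
is the radical of `ψ`. The transpose of `H` is self-dual as well and gives the reverse
identity `|H| (S'Z)_{xy} = |Q| |R| (ZS')_{xy}`; adding the two forces `ZS' = S'Z`.
`T` is diagonal, and its entries at `[u]` and `[v]` agree whenever `(u;v) ∈ 𝓛` because `𝓛` is even.
-/

open scoped Classical Real

theorem AddChar.sum_ite_mem_eq_ite {G : Type*} [AddGroup G] [Fintype G] (H : AddSubgroup G)
    (χ : AddChar G ℂ) :
    ∑ g, (if g ∈ H then χ g else 0) = if ∀ h ∈ H, χ h = 1 then (Nat.card H : ℂ) else 0 := by
  have htriv : χ.compAddMonoidHom H.subtype = 0 ↔ ∀ h ∈ H, χ h = 1 := by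
    simp [AddChar.eq_zero_iff]
  rw [← Finset.sum_filter, Finset.sum_subtype (p := (· ∈ H)) _ (fun g => by simp) χ,
    Nat.card_eq_fintype_card]
  simpa only [htriv, AddChar.compAddMonoidHom_apply, AddSubgroup.coe_subtype] using
    (χ.compAddMonoidHom H.subtype).sum_eq_ite

theorem AddSubgroup.sum_ite_sub_mem {G : Type*} [AddGroup G] [Fintype G] (K : AddSubgroup G)
    [DecidablePred (· ∈ K)] (y : G) : ∑ d, (if y - d ∈ K then (1 : ℂ) else 0) = Nat.card K := by
  rw [Fintype.sum_equiv (Equiv.subLeft y) (fun d => if y - d ∈ K then (1 : ℂ) else 0)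
    (fun r => if r ∈ K then 1 else 0) (fun _ => rfl), Finset.sum_boole,
    Nat.card_eq_fintype_card, Fintype.card_subtype]

theorem Matrix.commute_diagonal_of_ne_zero {ι α : Type*} [Fintype ι] [DecidableEq ι]
    [CommSemiring α] (M : Matrix ι ι α) (d : ι → α) (h : ∀ i j, M i j ≠ 0 → d i = d j) :
    Commute M (Matrix.diagonal d) := by
  ext i j
  rw [Matrix.mul_diagonal, Matrix.diagonal_mul]
  by_cases hM : M i j = 0
  · simp [hM]
  · rw [h i j hM, mul_comm]

theorem exp_two_pi_I_mul_eq_iff {t s : ℝ} :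
    exp (2 * π * I * t) = exp (2 * π * I * s) ↔ ∃ m : ℤ, t = s + m := by
  rw [Complex.exp_eq_exp_iff_exists_int]
  constructor
  · rintro ⟨m, hm⟩
    have hts : (t : ℂ) = s + m := mul_left_cancel₀ two_pi_I_ne_zero (by linear_combination hm)
    exact ⟨m, by exact_mod_cast hts⟩
  · rintro ⟨m, rfl⟩
    exact ⟨m, by push_cast; ring⟩

theorem exp_pi_I_mul_sub_eq_of_sub_eq_two_mul {t s : ℝ} {m : ℤ} (h : t - s = 2 * m) (c : ℂ) :
    exp (π * I * t - c) = exp (π * I * s - c) := by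
  have hts : (t : ℂ) = s + 2 * m := by rw [← sub_eq_iff_eq_add']; exact_mod_cast h
  rw [hts, Complex.exp_eq_exp_iff_exists_int]
  exact ⟨m, by ring⟩

section SelfDual

variable {Q : Type*} [AddCommGroup Q]

def IsSelfDual (ψ : Q →+ AddChar Q ℂ) (H : AddSubgroup (Q × Q)) : Prop :=
  ∀ p, p ∈ H ↔ ∀ q ∈ H, ψ p.1 q.1 = ψ p.2 q.2

namespace IsSelfDual

variable {ψ : Q →+ AddChar Q ℂ} {H : AddSubgroup (Q × Q)} (hH : IsSelfDual ψ H)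
include hH

theorem mk_zero_mem {r : Q} (hr : r ∈ ψ.ker) : ((0 : Q), r) ∈ H := by
  rw [AddMonoidHom.mem_ker, AddChar.eq_zero_iff] at hr
  exact (hH _).2 fun q _ => by simp [hr]

theorem swap : IsSelfDual ψ (H.map (AddEquiv.prodComm : Q × Q ≃+ Q × Q).toAddMonoidHom) := by
  intro p
  simp only [AddSubgroup.mem_map_equiv, AddEquiv.coe_prodComm_symm, hH p.swap, Prod.fst_swap,
    Prod.snd_swap]
  exact ⟨fun h q hq => (h q.swap (by simpa using hq)).symm,
    fun h q hq => (h q.swap hq).symm⟩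

variable [Fintype Q]

theorem sum_ite_mem_eq_ite (a b : Q) :
    ∑ q, (if q ∈ H then ψ a q.1 * (ψ b q.2)⁻¹ else 0)
      = if (a, b) ∈ H then (Nat.card H : ℂ) else 0 := by
  let χ : AddChar (Q × Q) ℂ := (ψ a).compAddMonoidHom (AddMonoidHom.fst Q Q) *
    ((ψ b).compAddMonoidHom (AddMonoidHom.snd Q Q))⁻¹
  have hχ (q : Q × Q) : χ q = ψ a q.1 * (ψ b q.2)⁻¹ := by
    simp [χ, AddChar.map_neg_eq_inv]
  have hmem : (a, b) ∈ H ↔ ∀ q ∈ H, χ q = 1 := by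
    simp only [hH (a, b), hχ, mul_inv_eq_one₀ ((ψ b).val_isUnit _).ne_zero]
  simp only [← hχ, hmem]
  exact AddChar.sum_ite_mem_eq_ite H χ

theorem sum_ite_mem_mul_ite_sub_mem_ker (f : Q → ℂ) (y : Q) :
    ∑ q : Q × Q, (if q ∈ H then f q.1 else 0) * (if y - q.2 ∈ ψ.ker then 1 else 0)
      = Nat.card ψ.ker * ∑ c, (if (c, y) ∈ H then f c else 0) := by
  rw [Fintype.sum_prod_type, Finset.mul_sum]
  refine Finset.sum_congr rfl fun c _ => ?_
  have hshift (d : Q) : (if (c, d) ∈ H then f c else 0) * (if y - d ∈ ψ.ker then 1 else 0)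
      = (if (c, y) ∈ H then f c else 0) * (if y - d ∈ ψ.ker then 1 else 0) := by
    by_cases hd : y - d ∈ ψ.ker
    · have hcy : (c, y) = (c, d) + (0, y - d) := by simp
      rw [hcy, H.add_mem_cancel_right (hH.mk_zero_mem hd)]
    · simp [hd]
  rw [Finset.sum_congr rfl fun d _ => hshift d, ← Finset.mul_sum, AddSubgroup.sum_ite_sub_mem,
    mul_comm]

theorem card_mul_sum_ite_mem_left (hψ : ∀ a b, ψ a b = ψ b a) (x y : Q) :
    (Nat.card H : ℂ) * ∑ z, (if (x, z) ∈ H then ψ z y else 0)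
      = Fintype.card Q * Nat.card ψ.ker * ∑ w, (if (w, y) ∈ H then ψ x w else 0) := by
  have hsum (u : Q) : ∑ z, ψ u z = if u ∈ ψ.ker then (Fintype.card Q : ℂ) else 0 := by
    simp only [(ψ u).sum_eq_ite, AddMonoidHom.mem_ker]
  calc (Nat.card H : ℂ) * ∑ z, (if (x, z) ∈ H then ψ z y else 0)
      = ∑ z, (∑ q, if q ∈ H then ψ x q.1 * (ψ z q.2)⁻¹ else 0) * ψ z y := by
        rw [Finset.mul_sum]
        refine Finset.sum_congr rfl fun z _ => ?_
        rw [hH.sum_ite_mem_eq_ite]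
        split_ifs <;> simp
    _ = ∑ q, (if q ∈ H then ψ x q.1 else 0) * ∑ z, ψ (y - q.2) z := by
        simp only [Finset.sum_mul]
        rw [Finset.sum_comm]
        refine Finset.sum_congr rfl fun q _ => ?_
        rw [Finset.mul_sum]
        refine Finset.sum_congr rfl fun z _ => ?_
        rw [hψ (y - q.2), AddChar.map_sub_eq_div]
        split_ifs <;> ring
    _ = Fintype.card Q * ∑ q : Q × Q,
          (if q ∈ H then ψ x q.1 else 0) * (if y - q.2 ∈ ψ.ker then 1 else 0) := by
        simp only [hsum, Finset.mul_sum]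
        refine Finset.sum_congr rfl fun q _ => ?_
        split_ifs <;> ring
    _ = _ := by
        rw [hH.sum_ite_mem_mul_ite_sub_mem_ker, mul_assoc]

theorem sum_ite_mem_left_eq_right (hψ : ∀ a b, ψ a b = ψ b a) (x y : Q) :
    ∑ z, (if (x, z) ∈ H then ψ z y else 0) = ∑ w, (if (w, y) ∈ H then ψ x w else 0) := by
  have hleft := hH.card_mul_sum_ite_mem_left hψ x y
  have hright := hH.swap.card_mul_sum_ite_mem_left hψ y x
  rw [AddSubgroup.card_map_of_injective (AddEquiv.injective _)] at hright
  simp only [AddSubgroup.mem_map_equiv, AddEquiv.coe_prodComm_symm, Prod.swap_prod_mk, hψ _ x,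
    hψ y] at hright
  have hpos : (Nat.card H + Fintype.card Q * Nat.card ψ.ker : ℂ) ≠ 0 := by
    exact_mod_cast (Nat.add_pos_left Nat.card_pos _).ne'
  exact mul_left_cancel₀ hpos (by linear_combination hleft - hright)

theorem commute_indicator_pairing (hψ : ∀ a b, ψ a b = ψ b a) :
    Commute (Matrix.of fun x y => if (x, y) ∈ H then (1 : ℂ) else 0)
      (Matrix.of fun x y => ψ x y) := by
  ext x y
  simpa only [Matrix.mul_apply, Matrix.of_apply, ite_mul, one_mul, zero_mul, mul_ite, mul_one,
    mul_zero] using hH.sum_ite_mem_left_eq_right hψ x y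

end IsSelfDual

end SelfDual

theorem dotR_eq_dotProduct {n : ℕ} (u v : Fin n → ℝ) : dotR u v = u ⬝ᵥ v := rfl

theorem dotR_comm {n : ℕ} (u v : Fin n → ℝ) : dotR u v = dotR v u := dotProduct_comm u v

namespace latQuot

variable {n : ℕ} {L : AddSubgroup (Fin n → ℝ)}

theorem out_sub_mem {a : dualLattice L} {x : latQuot L} (h : (a : latQuot L) = x) :
    ((Quotient.out x : dualLattice L) : Fin n → ℝ) - a ∈ L := by
  have hax : (a : latQuot L) = (Quotient.out x : dualLattice L) := by
    rw [h, QuotientAddGroup.out_eq']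
  rw [QuotientAddGroup.eq, AddSubgroup.mem_addSubgroupOf] at hax
  simpa [neg_add_eq_sub] using hax

theorem exists_dotR_out_eq {a b : dualLattice L} {x y : latQuot L} (ha : (a : latQuot L) = x)
    (hb : (b : latQuot L) = y) :
    ∃ m : ℤ, dotR ((Quotient.out x : dualLattice L) : Fin n → ℝ)
      ((Quotient.out y : dualLattice L) : Fin n → ℝ) = dotR (a : Fin n → ℝ) b + m := by
  set u := ((Quotient.out x : dualLattice L) : Fin n → ℝ)
  set v := ((Quotient.out y : dualLattice L) : Fin n → ℝ)
  obtain ⟨m₁, hm₁⟩ := (Quotient.out y).2 _ (out_sub_mem ha)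
  obtain ⟨m₂, hm₂⟩ := a.2 _ (out_sub_mem hb)
  refine ⟨m₁ + m₂, ?_⟩
  have hsplit :
      dotR u v = dotR v (u - a) + dotR (a : Fin n → ℝ) (v - b) + dotR (a : Fin n → ℝ) b := by
    simp only [dotR_comm v, dotR_eq_dotProduct, dotProduct_sub, sub_dotProduct]
    ring
  rw [hsplit, hm₁, hm₂]
  push_cast
  ring

theorem exp_dotR_out_eq {a b : dualLattice L} {x y : latQuot L} (ha : (a : latQuot L) = x)
    (hb : (b : latQuot L) = y) :
    exp (2 * π * I * dotR ((Quotient.out x : dualLattice L) : Fin n → ℝ)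
      ((Quotient.out y : dualLattice L) : Fin n → ℝ))
      = exp (2 * π * I * dotR (a : Fin n → ℝ) b) :=
  exp_two_pi_I_mul_eq_iff.2 (exists_dotR_out_eq ha hb)

variable (L) in
def pairing : latQuot L →+ AddChar (latQuot L) ℂ where
  toFun x :=
    { toFun := fun y => exp (2 * π * I * dotR ((Quotient.out x : dualLattice L) : Fin n → ℝ)
        ((Quotient.out y : dualLattice L) : Fin n → ℝ))
      map_zero_eq_one' := by
        rw [exp_dotR_out_eq (QuotientAddGroup.out_eq' x) (QuotientAddGroup.mk_zero _)]
        simp [dotR]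
      map_add_eq_mul' := fun y y' => by
        rw [exp_dotR_out_eq (QuotientAddGroup.out_eq' x) (b := Quotient.out y + Quotient.out y')
          (by simp), exp_dotR_out_eq (QuotientAddGroup.out_eq' x) (QuotientAddGroup.out_eq' y),
          exp_dotR_out_eq (QuotientAddGroup.out_eq' x) (QuotientAddGroup.out_eq' y'),
          ← Complex.exp_add]
        simp only [AddSubgroup.coe_add, dotR_eq_dotProduct, dotProduct_add]
        push_cast
        ring_nf }
  map_zero' := by
    ext y
    simp only [AddChar.coe_mk, AddChar.zero_apply]
    rw [exp_dotR_out_eq (QuotientAddGroup.mk_zero _) (QuotientAddGroup.out_eq' y)]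
    simp [dotR]
  map_add' x x' := by
    ext y
    simp only [AddChar.coe_mk, AddChar.add_apply]
    rw [exp_dotR_out_eq (a := Quotient.out x + Quotient.out x') (by simp)
        (QuotientAddGroup.out_eq' y), exp_dotR_out_eq (QuotientAddGroup.out_eq' x)
        (QuotientAddGroup.out_eq' y), exp_dotR_out_eq (QuotientAddGroup.out_eq' x')
        (QuotientAddGroup.out_eq' y), ← Complex.exp_add]
    simp only [AddSubgroup.coe_add, dotR_eq_dotProduct, add_dotProduct]
    push_cast
    ring_nf

theorem pairing_apply (x y : latQuot L) :
    pairing L x y = exp (2 * π * I * dotR ((Quotient.out x : dualLattice L) : Fin n → ℝ)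
      ((Quotient.out y : dualLattice L) : Fin n → ℝ)) := rfl

theorem pairing_apply_mk (x : latQuot L) (b : dualLattice L) :
    pairing L x b = exp (2 * π * I * dotR ((Quotient.out x : dualLattice L) : Fin n → ℝ) b) :=
  exp_dotR_out_eq (QuotientAddGroup.out_eq' x) rfl

theorem pairing_comm (x y : latQuot L) : pairing L x y = pairing L y x := by
  rw [pairing_apply, pairing_apply, dotR_comm]

theorem Smat_eq_smul [Fintype (latQuot L)] :
    Smat L = ((Real.sqrt (Fintype.card (latQuot L)))⁻¹ : ℂ) •
      Matrix.of fun x y => pairing L x y := by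
  ext x y
  simp [Smat, pairing_apply]

theorem Tmat_eq_diagonal : Tmat L = Matrix.diagonal fun x =>
    exp (π * I * dotR ((Quotient.out x : dualLattice L) : Fin n → ℝ)
      ((Quotient.out x : dualLattice L) : Fin n → ℝ) - π * I * n / 12) := by
  ext x y
  simp [Tmat, Matrix.diagonal_apply]

variable (L) in
/-- `𝓛/(L;L)`, as a subgroup of `L*/L × L*/L`. -/
def quotSubgroup (𝓛 : AddSubgroup ((Fin n → ℝ) × (Fin n → ℝ))) :
    AddSubgroup (latQuot L × latQuot L) :=
  (𝓛.comap ((dualLattice L).subtype.prodMap (dualLattice L).subtype)).map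
    ((QuotientAddGroup.mk' _).prodMap (QuotientAddGroup.mk' _))

variable {𝓛 : AddSubgroup ((Fin n → ℝ) × (Fin n → ℝ))}

theorem mk_mem_quotSubgroup {a b : dualLattice L} (h : ((a : Fin n → ℝ), (b : Fin n → ℝ)) ∈ 𝓛) :
    ((a : latQuot L), (b : latQuot L)) ∈ quotSubgroup L 𝓛 :=
  ⟨(a, b), h, rfl⟩

theorem mem_quotSubgroup_iff (hLsub : ∀ u ∈ L, ∀ v ∈ L, (u, v) ∈ 𝓛) {x y : latQuot L} :
    (x, y) ∈ quotSubgroup L 𝓛 ↔ (((Quotient.out x : dualLattice L) : Fin n → ℝ),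
      ((Quotient.out y : dualLattice L) : Fin n → ℝ)) ∈ 𝓛 := by
  constructor
  · rintro ⟨⟨a, b⟩, hab, hxy⟩
    obtain ⟨hx, hy⟩ := Prod.mk.inj hxy
    have hdiff := hLsub _ (out_sub_mem hx) _ (out_sub_mem hy)
    simpa using 𝓛.add_mem hab hdiff
  · intro h
    simpa using mk_mem_quotSubgroup h

theorem isSelfDual_quotSubgroup (hLsub : ∀ u ∈ L, ∀ v ∈ L, (u, v) ∈ 𝓛)
    (hLsup : ∀ p ∈ 𝓛, p.1 ∈ dualLattice L ∧ p.2 ∈ dualLattice L)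
    (hselfdual : (𝓛 : Set ((Fin n → ℝ) × (Fin n → ℝ)))
        = {q | ∀ p ∈ 𝓛, ∃ m : ℤ, hform q p = m}) :
    IsSelfDual (pairing L) (quotSubgroup L 𝓛) := by
  rintro ⟨x, y⟩
  rw [mem_quotSubgroup_iff hLsub, ← SetLike.mem_coe, hselfdual]
  constructor
  · rintro hxy ⟨c, d⟩ hcd
    rw [mem_quotSubgroup_iff hLsub] at hcd
    obtain ⟨m, hm⟩ := hxy _ hcd
    exact exp_two_pi_I_mul_eq_iff.2 ⟨m, by simp only [hform] at hm; linarith⟩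
  · intro h p hp
    obtain ⟨hp₁, hp₂⟩ := hLsup p hp
    have hphase := h _ (mk_mem_quotSubgroup (a := ⟨p.1, hp₁⟩) (b := ⟨p.2, hp₂⟩) hp)
    rw [pairing_apply_mk, pairing_apply_mk] at hphase
    obtain ⟨m, hm⟩ := exp_two_pi_I_mul_eq_iff.1 hphase
    exact ⟨m, by simp only [hform]; linarith⟩

end latQuot

open scoped Classical in
theorem stmt_3_general {n : ℕ} (L : AddSubgroup (Fin n → ℝ))
    [Fintype (latQuot L)]
    (𝓛 : AddSubgroup ((Fin n → ℝ) × (Fin n → ℝ)))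
    (hLsub : ∀ u ∈ L, ∀ v ∈ L, (u, v) ∈ 𝓛)
    (hLsup : ∀ p ∈ 𝓛, p.1 ∈ dualLattice L ∧ p.2 ∈ dualLattice L)
    (h𝓛even : ∀ p ∈ 𝓛, ∃ m : ℤ, hform p p = 2 * m)
    (hselfdual : (𝓛 : Set ((Fin n → ℝ) × (Fin n → ℝ)))
        = {q | ∀ p ∈ 𝓛, ∃ m : ℤ, hform q p = m}) :
    (Matrix.of fun x y : latQuot L =>
        (if (((Quotient.out x : dualLattice L) : Fin n → ℝ),
             ((Quotient.out y : dualLattice L) : Fin n → ℝ)) ∈ 𝓛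
         then (1 : ℂ) else 0)) * Smat L
      = Smat L * (Matrix.of fun x y : latQuot L =>
        (if (((Quotient.out x : dualLattice L) : Fin n → ℝ),
             ((Quotient.out y : dualLattice L) : Fin n → ℝ)) ∈ 𝓛
         then (1 : ℂ) else 0)) ∧
    (Matrix.of fun x y : latQuot L =>
        (if (((Quotient.out x : dualLattice L) : Fin n → ℝ),
             ((Quotient.out y : dualLattice L) : Fin n → ℝ)) ∈ 𝓛
         then (1 : ℂ) else 0)) * Tmat L
      = Tmat L * (Matrix.of fun x y : latQuot L =>
        (if (((Quotient.out x : dualLattice L) : Fin n → ℝ),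
             ((Quotient.out y : dualLattice L) : Fin n → ℝ)) ∈ 𝓛
         then (1 : ℂ) else 0)) ∧
    (if (((Quotient.out (0 : latQuot L) : dualLattice L) : Fin n → ℝ),
         ((Quotient.out (0 : latQuot L) : dualLattice L) : Fin n → ℝ)) ∈ 𝓛
     then (1 : ℕ) else 0) = 1 := by
  simp only [← latQuot.mem_quotSubgroup_iff hLsub]
  refine ⟨?_, ?_, if_pos (zero_mem _)⟩
  · rw [latQuot.Smat_eq_smul]
    exact ((latQuot.isSelfDual_quotSubgroup hLsub hLsup hselfdual).commute_indicator_pairing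
      latQuot.pairing_comm).smul_right _
  · rw [latQuot.Tmat_eq_diagonal]
    refine Matrix.commute_diagonal_of_ne_zero _ _ fun x y hxy => ?_
    have hmem : (x, y) ∈ latQuot.quotSubgroup L 𝓛 := by
      by_contra h
      simp [h] at hxy
    obtain ⟨m, hm⟩ := h𝓛even _ ((latQuot.mem_quotSubgroup_iff hLsub).1 hmem)
    exact exp_pi_I_mul_sub_eq_of_sub_eq_two_mul hm _

open scoped Classical in
/-- every even self-dual lattice `𝓛` with
`(L;L) ⊆ 𝓛 ⊆ (L*;L*)` defines a modular invariant:
`Z_{[u],[v]} = 1` iff `(u;v) ∈ 𝓛`, and `0` otherwise. -/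
theorem stmt_3 {n : ℕ} (L : AddSubgroup (Fin n → ℝ))
    (hEven : IsEvenLattice L) (hLL : L ≤ dualLattice L)
    (hspan : Submodule.span ℝ (L : Set (Fin n → ℝ)) = ⊤)
    [Fintype (latQuot L)]
    (𝓛 : AddSubgroup ((Fin n → ℝ) × (Fin n → ℝ)))
    (hLsub : ∀ u ∈ L, ∀ v ∈ L, (u, v) ∈ 𝓛)
    (hLsup : ∀ p ∈ 𝓛, p.1 ∈ dualLattice L ∧ p.2 ∈ dualLattice L)
    (h𝓛even : ∀ p ∈ 𝓛, ∃ m : ℤ, hform p p = 2 * m)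
    (hselfdual : (𝓛 : Set ((Fin n → ℝ) × (Fin n → ℝ)))
        = {q | ∀ p ∈ 𝓛, ∃ m : ℤ, hform q p = m}) :
    (Matrix.of fun x y : latQuot L =>
        (if (((Quotient.out x : dualLattice L) : Fin n → ℝ),
             ((Quotient.out y : dualLattice L) : Fin n → ℝ)) ∈ 𝓛
         then (1 : ℂ) else 0)) * Smat L
      = Smat L * (Matrix.of fun x y : latQuot L =>
        (if (((Quotient.out x : dualLattice L) : Fin n → ℝ),
             ((Quotient.out y : dualLattice L) : Fin n → ℝ)) ∈ 𝓛
         then (1 : ℂ) else 0)) ∧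
    (Matrix.of fun x y : latQuot L =>
        (if (((Quotient.out x : dualLattice L) : Fin n → ℝ),
             ((Quotient.out y : dualLattice L) : Fin n → ℝ)) ∈ 𝓛
         then (1 : ℂ) else 0)) * Tmat L
      = Tmat L * (Matrix.of fun x y : latQuot L =>
        (if (((Quotient.out x : dualLattice L) : Fin n → ℝ),
             ((Quotient.out y : dualLattice L) : Fin n → ℝ)) ∈ 𝓛
         then (1 : ℂ) else 0)) ∧
    (if (((Quotient.out (0 : latQuot L) : dualLattice L) : Fin n → ℝ),
         ((Quotient.out (0 : latQuot L) : dualLattice L) : Fin n → ℝ)) ∈ 𝓛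
     then (1 : ℕ) else 0) = 1 :=
  stmt_3_general L 𝓛 hLsub hLsup h𝓛even hselfdual

end
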